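/- Let [A] be a set of n×n real matrices, [b] a set of vectors in ℝⁿ, and [x], [z] boxes in ℝⁿ. Define the Gauss–Seidel image componentwise: x′ᵢ is any superset of {xᵢ ∈ [zᵢ] : ∃ A ∈ [A], ∃ b ∈ [b], Aᵢᵢ xᵢ = bᵢ - Σ_{j<i} Aᵢⱼ x′ⱼ - Σ_{j>i} Aᵢⱼ xⱼ for some x′ⱼ ∈ [x′ⱼ], xⱼ ∈ [xⱼ]}. Then every x ∈ [x] ∩ [z] satisfying A x = b for some A ∈ [A], b ∈ [b] belongs to the box [x′] = ∏ᵢ [x′ᵢ]. -/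
import Mathlib


open Matrix Finset

/-- Solution-enclosure property of the multidimensional interval Gauss–Seidel
operator: if each component set `X' i` contains the one-dimensional
Gauss–Seidel image (computed using already updated components `X' j` for
`j < i` and old components `X j` for `j > i`), then no solution `x ∈ [x] ∩ [z]`
of a linear system `A x = b` with `A ∈ [A]`, `b ∈ [b]` is lost. -/
theorem gauss_seidel_enclosure
    (n : ℕ) (𝒜 : Set (Matrix (Fin n) (Fin n) ℝ)) (ℬ : Set (Fin n → ℝ))
    (X Z X' : Fin n → Set ℝ)
    (h : ∀ i : Fin n, ∀ xi : ℝ, xi ∈ Z i →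
      (∃ A ∈ 𝒜, ∃ b ∈ ℬ, ∃ x' : Fin n → ℝ, ∃ x : Fin n → ℝ,
        (∀ j : Fin n, j < i → x' j ∈ X' j) ∧
        (∀ j : Fin n, i < j → x j ∈ X j) ∧
        A i i * xi = b i - (∑ j ∈ univ.filter (· < i), A i j * x' j)
          - ∑ j ∈ univ.filter (i < ·), A i j * x j) →
      xi ∈ X' i) :
    ∀ x : Fin n → ℝ, (∀ i, x i ∈ X i ∩ Z i) →
      ∀ A ∈ 𝒜, ∀ b ∈ ℬ, A.mulVec x = b → ∀ i, x i ∈ X' i := by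
  intro x hx A hA b hb hAxb i
  induction i using WellFoundedLT.induction with
  | ind i ih =>
    apply h i (x i) (hx i).2
    refine ⟨A, hA, b, hb, x, x, fun j hj => ih j hj, fun j hj => (hx j).1, ?_⟩
    have hsum : ∑ j, A i j * x j = b i := by
      have := congrFun hAxb i
      simpa [Matrix.mulVec, dotProduct] using this
    have hsplit : ∑ j, A i j * x j
        = (∑ j ∈ univ.filter (· < i), A i j * x j)
          + ∑ j ∈ univ.filter (fun j => ¬ j < i), A i j * x j :=
      (Finset.sum_filter_add_sum_filter_not univ _ _).symm
    have hset : univ.filter (fun j : Fin n => ¬ j < i)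
        = insert i (univ.filter (i < ·)) := by
      ext j
      simp only [Finset.mem_filter, Finset.mem_univ, true_and, Finset.mem_insert,
        not_lt, le_iff_lt_or_eq]
      constructor
      · rintro (hlt | rfl)
        · exact Or.inr hlt
        · exact Or.inl rfl
      · rintro (rfl | hlt)
        · exact Or.inr rfl
        · exact Or.inl hlt
    have hnotmem : i ∉ univ.filter (i < ·) := by simp
    rw [hset, Finset.sum_insert hnotmem] at hsplit
    linarith [hsum, hsplit]
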